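/- arXiv:1007.1124 — 2 statements merged into one kernel-verified Lean document; each statement's English description precedes it below -/
import Mathlib

section
/- Let ρ be a random time on (Ω, F, 𝐅, P) with canonical pair (K, L). Then for every nondecreasing function f: [0,1) → ℝ it holds that E_P[f(K_{ρ−})] ≤ ∫_{[0,1)} f(u) du ≤ E_P[f(K_ρ)]. In other words, the law of K_{ρ−} under P is first-order stochastically dominated by the standard uniform law on [0,1), and the standard uniform law is first-order stochastically dominated by the law of K_ρ under P. -/
open MeasureTheory Filter Set ProbabilityTheory
open scoped ENNReal NNReal Topology

noncomputable section

namespace RandTimes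

variable {Ω : Type*} {m : MeasurableSpace Ω}

/-- Left limit of a real-valued path indexed by `ℝ≥0`, with the paper's convention that
the left limit at time `0` equals `0`. -/
noncomputable def llim (f : ℝ≥0 → ℝ) (t : ℝ≥0) : ℝ :=
  if t = 0 then 0 else Function.leftLim f t

/-- Right-continuity of a filtration: `𝓕 t = ⋂_{s > t} 𝓕 s`. -/
def RightContFiltration (ℱ : Filtration ℝ≥0 m) : Prop :=
  ∀ t : ℝ≥0, (ℱ t : MeasurableSpace Ω) = ⨅ s ∈ Set.Ioi t, (ℱ s : MeasurableSpace Ω)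

/-- `L` is a local martingale on `(Ω, 𝐅, μ)`: it is adapted, has `μ`-a.s. càdlàg paths, and
there is a nondecreasing sequence of stopping times increasing to `∞` such that each stopped
process is a martingale. -/
def IsLocalMartingale (ℱ : Filtration ℝ≥0 m) (μ : Measure Ω) (L : ℝ≥0 → Ω → ℝ) : Prop :=
  Adapted ℱ L ∧
  (∀ᵐ ω ∂μ, (∀ t, ContinuousWithinAt (fun s => L s ω) (Set.Ici t) t) ∧
      (∀ t : ℝ≥0, t ≠ 0 → ∃ c : ℝ, Tendsto (fun s => L s ω) (𝓝[<] t) (𝓝 c))) ∧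
  ∃ τ : ℕ → Ω → ℝ≥0,
    (∀ n, IsStoppingTime ℱ (fun ω => ((τ n ω : ℝ≥0) : WithTop ℝ≥0))) ∧
    (∀ ω, Monotone fun n => τ n ω) ∧
    (∀ ω, Tendsto (fun n => τ n ω) atTop atTop) ∧
    (∀ n, Martingale (MeasureTheory.stoppedProcess L (fun ω => ((τ n ω : ℝ≥0) : WithTop ℝ≥0))) ℱ μ)

/-- The optional σ-algebra on `ℝ≥0 × Ω`: the σ-algebra generated by all adapted
right-continuous processes. -/
def optionalSigma (ℱ : Filtration ℝ≥0 m) : MeasurableSpace (ℝ≥0 × Ω) :=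
  ⨆ X ∈ {X : ℝ≥0 → Ω → ℝ | Adapted ℱ X ∧
      ∀ ω t, ContinuousWithinAt (fun s => X s ω) (Set.Ici t) t},
    MeasurableSpace.comap (fun p : ℝ≥0 × Ω => X p.1 p.2) (inferInstance : MeasurableSpace ℝ)

/-- A process is optional if it is measurable with respect to the optional σ-algebra. -/
def IsOptional (ℱ : Filtration ℝ≥0 m) (V : ℝ≥0 → Ω → ℝ) : Prop :=
  @Measurable _ _ (optionalSigma ℱ) _ fun p : ℝ≥0 × Ω => V p.1 p.2

/-- Evaluation of a process at a `[0,∞]`-valued random time. -/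
noncomputable def evalT (V : ℝ≥0 → Ω → ℝ) (τ : Ω → ℝ≥0∞) (ω : Ω) : ℝ :=
  V (τ ω).toNNReal ω

/-- Evaluation of a process at a `[0,∞]`-valued random time, with the convention
`V_τ 1_{τ < ∞}`. -/
noncomputable def evalFin (V : ℝ≥0 → Ω → ℝ) (τ : Ω → ℝ≥0∞) (ω : Ω) : ℝ :=
  if τ ω < ⊤ then V (τ ω).toNNReal ω else 0

/-- Evaluation of a process at a `[0,∞]`-valued random time, where at `{τ = ∞}` the value
is the limit of the path at infinity. -/
noncomputable def evalLim (V : ℝ≥0 → Ω → ℝ) (τ : Ω → ℝ≥0∞) (ω : Ω) : ℝ :=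
  if τ ω < ⊤ then V (τ ω).toNNReal ω else limUnder atTop fun t : ℝ≥0 => V t ω

/-- `η_u = inf{t : K_t ≥ u}`, with `inf ∅ = ∞`. -/
noncomputable def hitTime (K : ℝ≥0 → Ω → ℝ) (u : ℝ) (ω : Ω) : ℝ≥0∞ :=
  sInf ((fun t : ℝ≥0 => (t : ℝ≥0∞)) '' {t : ℝ≥0 | u ≤ K t ω})

/-- `(K, L)` is the canonical pair associated with the random time `ρ` on `(Ω, 𝓕, 𝐅, P)`;
here `κ ω` is the Lebesgue–Stieltjes measure `dK(ω)` on `ℝ≥0` (with the convention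
`K_{0-} = 0`, so that `κ ω (Iic t) = K t ω`). -/
structure IsCanonicalPair (ℱ : Filtration ℝ≥0 m) (P : Measure Ω) (ρ : Ω → ℝ≥0∞)
    (K L : ℝ≥0 → Ω → ℝ) (κ : Ω → Measure ℝ≥0) : Prop where
  K_adapted : Adapted ℱ K
  K_rc : ∀ ω t, ContinuousWithinAt (fun s => K s ω) (Set.Ici t) t
  K_mono : ∀ ω, Monotone fun t => K t ω
  K_nonneg : ∀ t ω, 0 ≤ K t ω
  K_le_one : ∀ t ω, K t ω ≤ 1
  kappa_eq : ∀ ω t, κ ω (Set.Iic t) = ENNReal.ofReal (K t ω)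
  L_nonneg : ∀ t ω, 0 ≤ L t ω
  L_init : ∀ᵐ ω ∂P, L 0 ω = 1
  L_locMart : IsLocalMartingale ℱ P L
  eval_eq : ∀ V : ℝ≥0 → Ω → ℝ, IsOptional ℱ V → (∀ t ω, 0 ≤ V t ω) →
    ∫⁻ ω, ENNReal.ofReal (evalT V ρ ω) ∂P =
      ∫⁻ ω, (∫⁻ t, ENNReal.ofReal (V t ω * L t ω) ∂(κ ω)) ∂P
  L_flat : ∀ᵐ ω ∂P, ∀ s t : ℝ≥0, s ≤ t → llim (fun r => K r ω) s = 1 → L t ω = L s ω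
  kappa_nullL : ∀ᵐ ω ∂P, κ ω {t : ℝ≥0 | L t ω = 0} = 0

/-- The probability `Q_u` given by `dQ_u = L_{η_u} dP`. -/
noncomputable def Qu (P : Measure Ω) (K L : ℝ≥0 → Ω → ℝ) (u : ℝ) : Measure Ω :=
  P.withDensity fun ω => ENNReal.ofReal (evalLim L (hitTime K u) ω)

/-- The running supremum `M^*_t = sup_{s ≤ t} M_s`. -/
noncomputable def runSup (M : ℝ≥0 → Ω → ℝ) (t : ℝ≥0) (ω : Ω) : ℝ :=
  ⨆ s : Set.Iic t, M s.1 ω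

end RandTimes

/-!
Write `η_v = inf {t | K_t ≥ v}`. Pathwise, `dK` is the image of Lebesgue measure on `[0, K_∞)`
under `v ↦ η_v`, so the defining identity of the canonical pair becomes
`E[V_ρ] = ∫_0^1 E[V_{η_v} L_{η_v}; v < K_∞] dv` for nonnegative optional `V`. As `L` is a
nonnegative local martingale with `L_0 = 1`, the weights `E[L_{η_v}; v < K_∞]` are at most `1`,
and `V = 1` shows that they integrate to `1` over `[0, 1)`; so they equal `1` for a.e. `v`.
Taking `V = g(K)` and `V = g(K_-)` for nondecreasing `g ≥ 0`, and using
`K_{η_v-} ≤ v ≤ K_{η_v}`, gives the two inequalities.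
-/

namespace RandTimes

section Dyadic

noncomputable def dyadic (k j : ℕ) : ℝ≥0 := j / 2 ^ k

noncomputable def dyadicCeil (k : ℕ) (x : ℝ≥0) : ℝ≥0 := dyadic k ⌈x * 2 ^ k⌉₊

lemma dyadic_natCast_mul (k n : ℕ) : dyadic k (n * 2 ^ k) = n := by
  simp [dyadic]

lemma dyadicCeil_le_iff {k : ℕ} {x t : ℝ≥0} :
    dyadicCeil k x ≤ t ↔ x ≤ dyadic k ⌊t * 2 ^ k⌋₊ := by
  rw [dyadicCeil, dyadic, dyadic, div_le_iff₀ (by positivity), le_div_iff₀ (by positivity),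
    ← Nat.ceil_le, Nat.le_floor_iff (by positivity)]

lemma le_dyadicCeil (k : ℕ) (x : ℝ≥0) : x ≤ dyadicCeil k x := by
  rw [dyadicCeil, dyadic, le_div_iff₀ (by positivity)]
  exact Nat.le_ceil _

lemma dyadicCeil_le_add (k : ℕ) (x : ℝ≥0) : dyadicCeil k x ≤ x + (2 ^ k)⁻¹ := by
  rw [dyadicCeil, dyadic, div_le_iff₀ (by positivity), add_mul,
    inv_mul_cancel₀ (by positivity)]
  exact (Nat.ceil_lt_add_one (zero_le)).le

lemma monotone_dyadicCeil (k : ℕ) : Monotone (dyadicCeil k) := fun _ _ hxy =>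
  div_le_div_of_nonneg_right (Nat.cast_le.2 (Nat.ceil_mono (by gcongr))) zero_le

lemma dyadicCeil_natCast (k n : ℕ) : dyadicCeil k n = n := by
  rw [dyadicCeil, show (n : ℝ≥0) * 2 ^ k = ((n * 2 ^ k : ℕ) : ℝ≥0) by push_cast; rfl,
    Nat.ceil_natCast, dyadic_natCast_mul]

lemma tendsto_dyadicCeil (x : ℝ≥0) :
    Tendsto (fun k => dyadicCeil k x) atTop (𝓝[≥] x) := by
  have hinv : Tendsto (fun k : ℕ => x + (2 ^ k)⁻¹) atTop (𝓝 x) := by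
    simpa [← inv_pow] using tendsto_const_nhds.add
      (NNReal.tendsto_pow_atTop_nhds_zero_of_lt_one (r := 2⁻¹) (by norm_num))
  refine tendsto_nhdsWithin_iff.2 ⟨?_, .of_forall fun k => le_dyadicCeil k x⟩
  exact tendsto_of_tendsto_of_tendsto_of_le_of_le tendsto_const_nhds hinv
    (le_dyadicCeil · x) (dyadicCeil_le_add · x)

end Dyadic

section JointMeasurability

variable {Ω : Type*} {X : ℝ≥0 → Ω → ℝ}

noncomputable def dyadicRightLim (X : ℝ≥0 → Ω → ℝ) (t : ℝ≥0) (ω : Ω) : ℝ :=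
  limsup (fun k => X (dyadicCeil k t) ω) atTop

lemma dyadicRightLim_eq {t : ℝ≥0} {ω : Ω}
    (h : ContinuousWithinAt (fun s => X s ω) (Ici t) t) : dyadicRightLim X t ω = X t ω :=
  (h.tendsto.comp (tendsto_dyadicCeil t)).limsup_eq

lemma measurable_dyadicRightLim [MeasurableSpace Ω] (hX : ∀ t, Measurable (X t)) :
    Measurable fun p : ℝ≥0 × Ω => dyadicRightLim X p.1 p.2 := by
  refine Measurable.limsup fun k => ?_
  have hgrid : Measurable fun q : ℕ × Ω => X (dyadic k q.1) q.2 :=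
    measurable_from_prod_countable_right fun j => hX (dyadic k j)
  exact hgrid.comp ((Nat.measurable_ceil.comp (measurable_fst.mul_const _)).prodMk measurable_snd)

lemma measurable_uncurry_of_continuousWithinAt [MeasurableSpace Ω] (hX : ∀ t, Measurable (X t))
    (hrc : ∀ ω t, ContinuousWithinAt (fun s => X s ω) (Ici t) t) :
    Measurable fun p : ℝ≥0 × Ω => X p.1 p.2 := by
  simpa only [dyadicRightLim_eq (hrc _ _)] using measurable_dyadicRightLim hX

end JointMeasurability

section LeftLimit

variable {f : ℝ≥0 → ℝ}

lemma llim_le (hf : Monotone f) {t : ℝ≥0} {v : ℝ} (hv : 0 ≤ v) (h : ∀ s < t, f s ≤ v) :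
    llim f t ≤ v := by
  rw [llim]
  split_ifs with ht
  · exact hv
  · have : (𝓝[<] t).NeBot := nhdsLT_neBot_of_exists_lt ⟨0, pos_iff_ne_zero.2 ht⟩
    exact le_of_tendsto (hf.tendsto_leftLim t) (eventually_nhdsWithin_of_forall h)

lemma llim_nonneg (hf : Monotone f) (hf0 : ∀ t, 0 ≤ f t) (t : ℝ≥0) : 0 ≤ llim f t := by
  rw [llim]
  split_ifs with ht
  · exact le_rfl
  · exact (hf0 0).trans (hf.le_leftLim (pos_iff_ne_zero.2 ht))

lemma llim_le_self (hf : Monotone f) (hf0 : ∀ t, 0 ≤ f t) (t : ℝ≥0) : llim f t ≤ f t :=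
  llim_le hf (hf0 t) fun _ hs => hf hs.le

lemma llim_eq_iSup {f : ℝ≥0 → ℝ} (hf : Monotone f) {t : ℝ≥0} (ht : t ≠ 0) :
    llim f t = ⨆ n : ℕ, f (t - ((n + 1 : ℕ) : ℝ≥0)⁻¹) := by
  have hlt : ∀ n : ℕ, t - ((n + 1 : ℕ) : ℝ≥0)⁻¹ < t :=
    fun n => tsub_lt_self (pos_iff_ne_zero.2 ht) (by positivity)
  have hbdd : BddAbove (range fun n : ℕ => f (t - ((n + 1 : ℕ) : ℝ≥0)⁻¹)) :=
    ⟨f t, forall_mem_range.2 fun n => hf (hlt n).le⟩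
  have htend : Tendsto (fun n : ℕ => t - ((n + 1 : ℕ) : ℝ≥0)⁻¹) atTop (𝓝[<] t) := by
    refine tendsto_nhdsWithin_iff.2 ⟨?_, .of_forall hlt⟩
    simpa using tendsto_const_nhds.sub
      ((tendsto_inv_atTop_nhds_zero_nat (𝕜 := ℝ≥0)).comp (tendsto_add_atTop_nat 1))
  rw [llim, if_neg ht]
  exact le_antisymm
    (le_of_tendsto ((hf.tendsto_leftLim t).comp htend) (.of_forall fun n => le_ciSup hbdd n))
    (ciSup_le fun n => hf.le_leftLim (hlt n))

end LeftLimit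

section Optional

variable {Ω : Type*} {m : MeasurableSpace Ω} {ℱ : Filtration ℝ≥0 m}

lemma isOptional_of_continuousWithinAt {X : ℝ≥0 → Ω → ℝ} (hX : Adapted ℱ X)
    (hrc : ∀ ω t, ContinuousWithinAt (fun s => X s ω) (Ici t) t) : IsOptional ℱ X :=
  Measurable.of_comap_le <| le_iSup₂_of_le (f := fun (X : ℝ≥0 → Ω → ℝ) _ =>
    MeasurableSpace.comap (fun p : ℝ≥0 × Ω => X p.1 p.2) (inferInstance : MeasurableSpace ℝ))
    X ⟨hX, hrc⟩ le_rfl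

lemma optionalSigma_le_prod : optionalSigma ℱ ≤ (inferInstance : MeasurableSpace (ℝ≥0 × Ω)) :=
  iSup₂_le fun _ ⟨hX, hrc⟩ =>
    (measurable_uncurry_of_continuousWithinAt (fun t => (hX t).mono (ℱ.le t) le_rfl) hrc).comap_le

lemma IsOptional.measurable_uncurry {V : ℝ≥0 → Ω → ℝ} (hV : IsOptional ℱ V) :
    Measurable fun p : ℝ≥0 × Ω => V p.1 p.2 :=
  hV.mono optionalSigma_le_prod le_rfl

lemma IsOptional.measurable_evalT {V : ℝ≥0 → Ω → ℝ} (hV : IsOptional ℱ V) {τ : Ω → ℝ≥0∞}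
    (hτ : Measurable τ) : Measurable (evalT V τ) :=
  hV.measurable_uncurry.comp (hτ.ennreal_toNNReal.prodMk measurable_id)

lemma isOptional_llim {K : ℝ≥0 → Ω → ℝ} (hK : Adapted ℱ K)
    (hrc : ∀ ω t, ContinuousWithinAt (fun s => K s ω) (Ici t) t)
    (hmono : ∀ ω, Monotone fun t => K t ω) :
    IsOptional ℱ fun t ω => llim (fun s => K s ω) t := by
  have hshift (c : ℝ≥0) : IsOptional ℱ fun t ω => K (t - c) ω :=
    isOptional_of_continuousWithinAt (fun t => (hK (t - c)).mono (ℱ.mono tsub_le_self) le_rfl)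
      fun ω t => (hrc ω (t - c)).comp (f := fun s => s - c)
        (continuous_sub_right c).continuousWithinAt fun _ hs => tsub_le_tsub_right hs c
  have hzero : MeasurableSet[optionalSigma ℱ] {p : ℝ≥0 × Ω | p.1 = 0} := by
    have hcoe : IsOptional ℱ fun t (_ : Ω) => (t : ℝ) := isOptional_of_continuousWithinAt
      (fun _ => measurable_const) fun _ _ => NNReal.continuous_coe.continuousWithinAt
    convert hcoe (measurableSet_singleton 0) using 1
    ext
    simp
  have hrepr : (fun p : ℝ≥0 × Ω => llim (fun s => K s p.2) p.1) = fun p =>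
      if p.1 = 0 then 0 else ⨆ n : ℕ, K (p.1 - ((n + 1 : ℕ) : ℝ≥0)⁻¹) p.2 := by
    funext p
    split_ifs with h
    · simp [llim, h]
    · exact llim_eq_iSup (hmono p.2) h
  change Measurable[optionalSigma ℱ] _
  rw [hrepr]
  exact Measurable.ite hzero measurable_const (Measurable.iSup fun n => hshift _)

end Optional

section HittingTime

variable {Ω : Type*} {K : ℝ≥0 → Ω → ℝ} {ω : Ω} {v : ℝ}

/-- `K_∞`, for a nondecreasing path. -/
noncomputable def terminal (K : ℝ≥0 → Ω → ℝ) (ω : Ω) : ℝ := ⨆ n : ℕ, K n ω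

/-- The hitting time `η_v` as an `ℝ≥0`; it is `0` when `η_v = ∞`, so it is only meaningful for
`v < K_∞`. -/
noncomputable def finHitTime (K : ℝ≥0 → Ω → ℝ) (v : ℝ) (ω : Ω) : ℝ≥0 := (hitTime K v ω).toNNReal

lemma hitTime_le_iff (hmono : Monotone fun t => K t ω)
    (hrc : ∀ t, ContinuousWithinAt (fun s => K s ω) (Ici t) t) {t : ℝ≥0} :
    hitTime K v ω ≤ t ↔ v ≤ K t ω := by
  refine ⟨fun h => ?_, fun h => sInf_le ⟨t, h, rfl⟩⟩
  have hright : ∀ u ∈ Ioi t, v ≤ K u ω := fun u hu => by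
    obtain ⟨_, ⟨s, hs, rfl⟩, hsu⟩ := sInf_lt_iff.1 (h.trans_lt (ENNReal.coe_lt_coe.2 hu))
    exact hs.trans (hmono (ENNReal.coe_lt_coe.1 hsu).le)
  exact ge_of_tendsto ((hrc t).mono Ioi_subset_Ici_self).tendsto
    (eventually_nhdsWithin_of_forall hright)

lemma monotone_hitTime (K : ℝ≥0 → Ω → ℝ) (ω : Ω) : Monotone fun v => hitTime K v ω :=
  fun _ _ hvw => sInf_le_sInf (image_mono fun _ ht => hvw.trans ht)

lemma K_lt_of_lt_finHitTime {s : ℝ≥0} (h : s < finHitTime K v ω) : K s ω < v := by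
  by_contra! hv
  have hle : hitTime K v ω ≤ s := sInf_le ⟨s, hv, rfl⟩
  exact h.not_ge (by simpa [finHitTime] using ENNReal.toNNReal_mono ENNReal.coe_ne_top hle)

lemma llim_K_finHitTime_le (hmono : Monotone fun t => K t ω) (hv : 0 ≤ v) :
    llim (fun s => K s ω) (finHitTime K v ω) ≤ v :=
  llim_le hmono hv fun _ hs => (K_lt_of_lt_finHitTime hs).le

lemma bddAbove_range_K (hb : ∀ t, K t ω ≤ 1) : BddAbove (range fun n : ℕ => K n ω) :=
  ⟨1, forall_mem_range.2 fun n => hb n⟩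

lemma K_le_terminal (hmono : Monotone fun t => K t ω) (hb : ∀ t, K t ω ≤ 1) (t : ℝ≥0) :
    K t ω ≤ terminal K ω :=
  let ⟨n, hn⟩ := exists_nat_ge t
  (hmono hn).trans (le_ciSup (bddAbove_range_K hb) n)

lemma terminal_le_one (hb : ∀ t, K t ω ≤ 1) : terminal K ω ≤ 1 :=
  ciSup_le fun n => hb n

lemma hitTime_lt_top (hb : ∀ t, K t ω ≤ 1) (hv : v < terminal K ω) : hitTime K v ω < ⊤ :=
  let ⟨n, hn⟩ := (lt_ciSup_iff (bddAbove_range_K hb)).1 hv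
  (show hitTime K v ω ≤ (n : ℝ≥0) from sInf_le ⟨n, hn.le, rfl⟩).trans_lt ENNReal.coe_lt_top

lemma finHitTime_le_iff (hmono : Monotone fun t => K t ω)
    (hrc : ∀ t, ContinuousWithinAt (fun s => K s ω) (Ici t) t) (hv : hitTime K v ω ≠ ⊤)
    {t : ℝ≥0} : finHitTime K v ω ≤ t ↔ v ≤ K t ω := by
  rw [← hitTime_le_iff hmono hrc, finHitTime, ← ENNReal.coe_le_coe, ENNReal.coe_toNNReal hv]

lemma le_K_finHitTime (hmono : Monotone fun t => K t ω)
    (hrc : ∀ t, ContinuousWithinAt (fun s => K s ω) (Ici t) t) (hv : hitTime K v ω ≠ ⊤) :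
    v ≤ K (finHitTime K v ω) ω :=
  (finHitTime_le_iff hmono hrc hv).1 le_rfl

lemma measurable_finHitTime (K : ℝ≥0 → Ω → ℝ) (ω : Ω) : Measurable fun v => finHitTime K v ω :=
  ENNReal.measurable_toNNReal.comp (monotone_hitTime K ω).measurable

variable [MeasurableSpace Ω]

lemma measurable_terminal (hK : ∀ t, Measurable (K t)) : Measurable (terminal K) :=
  Measurable.iSup fun n => hK n

lemma measurable_hitTime_uncurry (hmono : ∀ ω, Monotone fun t => K t ω)
    (hrc : ∀ ω t, ContinuousWithinAt (fun s => K s ω) (Ici t) t) (hK : ∀ t, Measurable (K t)) :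
    Measurable fun p : ℝ × Ω => hitTime K p.1 p.2 := by
  refine measurable_of_Iic fun x => ?_
  induction x using ENNReal.recTopCoe with
  | top => simp
  | coe t =>
    have hpre : (fun p : ℝ × Ω => hitTime K p.1 p.2) ⁻¹' Iic (t : ℝ≥0∞) =
        {p | p.1 ≤ K t p.2} := by
      ext p
      exact hitTime_le_iff (hmono p.2) (hrc p.2)
    rw [hpre]
    exact measurableSet_le measurable_fst ((hK t).comp measurable_snd)

lemma measurable_finHitTime_uncurry (hmono : ∀ ω, Monotone fun t => K t ω)
    (hrc : ∀ ω t, ContinuousWithinAt (fun s => K s ω) (Ici t) t) (hK : ∀ t, Measurable (K t)) :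
    Measurable fun p : ℝ × Ω => finHitTime K p.1 p.2 :=
  ENNReal.measurable_toNNReal.comp (measurable_hitTime_uncurry hmono hrc hK)

end HittingTime

section TimeChange

variable {Ω : Type*} {K : ℝ≥0 → Ω → ℝ} {ω : Ω} {κ : Measure ℝ≥0}

lemma eq_map_finHitTime (hmono : Monotone fun t => K t ω)
    (hrc : ∀ t, ContinuousWithinAt (fun s => K s ω) (Ici t) t) (hb : ∀ t, K t ω ≤ 1)
    (hκ : ∀ t, κ (Iic t) = ENNReal.ofReal (K t ω)) :
    κ = (volume.restrict (Ico 0 (terminal K ω))).map fun v => finHitTime K v ω := by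
  have hη := measurable_finHitTime K ω
  have : IsFiniteMeasure (volume.restrict (Ico (0 : ℝ) (terminal K ω))) :=
    isFiniteMeasure_restrict.2 measure_Ico_lt_top.ne
  refine (Measure.ext_of_Iic _ _ fun a => ?_).symm
  have hpre : (fun v => finHitTime K v ω) ⁻¹' Iic a ∩ Ico 0 (terminal K ω) =
      Iic (K a ω) ∩ Ico 0 (terminal K ω) := by
    ext v
    simp only [mem_inter_iff, mem_preimage, mem_Iic]
    exact and_congr_left fun hv => finHitTime_le_iff hmono hrc (hitTime_lt_top hb hv.2).ne
  rw [hκ, Measure.map_apply hη measurableSet_Iic, Measure.restrict_apply (hη measurableSet_Iic),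
    hpre]
  have hKa := K_le_terminal hmono hb a
  refine le_antisymm ((measure_mono ?_).trans_eq (by rw [Real.volume_Icc, sub_zero]))
    ((measure_mono ?_).trans_eq' (by rw [Real.volume_Ico, sub_zero]))
  · exact fun v hv => ⟨hv.2.1, hv.1⟩
  · exact fun v hv => ⟨hv.2.le, hv.1, hv.2.trans_le hKa⟩

lemma lintegral_eq_setLIntegral_finHitTime (hmono : Monotone fun t => K t ω)
    (hrc : ∀ t, ContinuousWithinAt (fun s => K s ω) (Ici t) t) (hb : ∀ t, K t ω ≤ 1)
    (hκ : ∀ t, κ (Iic t) = ENNReal.ofReal (K t ω))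
    {h : ℝ≥0 → ℝ≥0∞} (hh : Measurable h) :
    ∫⁻ t, h t ∂κ =
      ∫⁻ v in Ico 0 1, if v < terminal K ω then h (finHitTime K v ω) else 0 := by
  have hIco : Iio (terminal K ω) ∩ Ico 0 1 = Ico 0 (terminal K ω) := by
    ext v
    simp only [mem_inter_iff, mem_Iio, mem_Ico]
    exact ⟨fun h => ⟨h.2.1, h.1⟩, fun h => ⟨h.2, h.1, h.2.trans_le (terminal_le_one hb)⟩⟩
  have hind : (fun v => if v < terminal K ω then h (finHitTime K v ω) else 0) =
      (Iio (terminal K ω)).indicator fun v => h (finHitTime K v ω) := by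
    ext v
    simp [indicator_apply]
  rw [hind, eq_map_finHitTime hmono hrc hb hκ, lintegral_map hh (measurable_finHitTime K ω),
    lintegral_indicator measurableSet_Iio, Measure.restrict_restrict measurableSet_Iio, hIco]

end TimeChange

section OptionalSampling

variable {Ω ι : Type*} {m : MeasurableSpace Ω} {μ : Measure Ω} [IsFiniteMeasure μ]
  [LinearOrder ι] [TopologicalSpace ι] [OrderTopology ι] [FirstCountableTopology ι] [Nonempty ι]
  {ℱ : Filtration ι m} {f : ι → Ω → ℝ} {τ : Ω → WithTop ι} {n : ι}

lemma _root_.MeasureTheory.Martingale.integrable_stoppedValue_of_countable_range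
    (hf : Martingale f ℱ μ) (hτ : IsStoppingTime ℱ τ) (hle : ∀ ω, τ ω ≤ n)
    (hc : (range τ).Countable) : Integrable (stoppedValue f τ) μ :=
  integrable_condExp.congr
    (hf.stoppedValue_ae_eq_condExp_of_le_const_of_countable_range hτ hle hc).symm

lemma _root_.MeasureTheory.Martingale.integral_stoppedValue_of_countable_range
    (hf : Martingale f ℱ μ) (hτ : IsStoppingTime ℱ τ) (hle : ∀ ω, τ ω ≤ n)
    (hc : (range τ).Countable) : ∫ ω, stoppedValue f τ ω ∂μ = ∫ ω, f n ω ∂μ := by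
  rw [integral_congr_ae (hf.stoppedValue_ae_eq_condExp_of_le_const_of_countable_range hτ hle hc),
    integral_condExp (hτ.measurableSpace_le_of_le hle)]

end OptionalSampling

section DyadicStop

variable {Ω : Type*} {m : MeasurableSpace Ω} {τ : Ω → ℝ≥0∞}

noncomputable def dyadicStop (τ : Ω → ℝ≥0∞) (k : ℕ) (ω : Ω) : ℝ≥0 :=
  dyadicCeil k (min (τ ω) k).toNNReal

lemma dyadicStop_le (k : ℕ) (ω : Ω) : dyadicStop τ k ω ≤ k := by
  rw [dyadicStop, ← dyadicCeil_natCast k k]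
  refine monotone_dyadicCeil k ?_
  simpa using ENNReal.toNNReal_mono (ENNReal.natCast_ne_top k) (min_le_right (τ ω) k)

lemma countable_range_dyadicStop (k : ℕ) :
    (range fun ω => (dyadicStop τ k ω : WithTop ℝ≥0)).Countable :=
  ((countable_range (dyadic k)).image WithTop.some).mono <| by
    rintro _ ⟨ω, rfl⟩
    exact ⟨_, ⟨_, rfl⟩, rfl⟩

lemma isStoppingTime_dyadicStop {ℱ : Filtration ℝ≥0 m}
    (hτ : ∀ t : ℝ≥0, MeasurableSet[ℱ t] {ω | τ ω ≤ t}) (k : ℕ) :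
    IsStoppingTime ℱ fun ω => (dyadicStop τ k ω : WithTop ℝ≥0) := by
  intro t
  set d := dyadic k ⌊t * 2 ^ k⌋₊
  have hdt : d ≤ t := (le_dyadicCeil k d).trans (dyadicCeil_le_iff.2 le_rfl)
  have hset : {ω | (dyadicStop τ k ω : WithTop ℝ≥0) ≤ t} =
      {ω | τ ω ≤ d} ∪ {_ω | ((k : ℝ≥0) : ℝ≥0∞) ≤ d} := by
    ext ω
    simp only [mem_ofPred_eq, mem_union, WithTop.coe_le_coe, dyadicStop, dyadicCeil_le_iff]
    rw [← ENNReal.coe_le_coe, ENNReal.coe_toNNReal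
      (ne_top_of_le_ne_top (ENNReal.natCast_ne_top k) (min_le_right _ _)), min_le_iff]
    simp [d]
  rw [hset]
  exact ℱ.mono hdt _ ((hτ d).union (MeasurableSet.const _))

lemma tendsto_dyadicStop {ω : Ω} (hτ : τ ω ≠ ⊤) :
    Tendsto (fun k => dyadicStop τ k ω) atTop (𝓝[≥] (τ ω).toNNReal) := by
  obtain ⟨n, hn⟩ := ENNReal.exists_nat_gt hτ
  refine (tendsto_dyadicCeil _).congr' ?_
  filter_upwards [eventually_ge_atTop n] with k hk
  rw [dyadicStop, min_eq_left (hn.le.trans (by exact_mod_cast hk))]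

end DyadicStop

section DensityBound

variable {Ω : Type*} {m : MeasurableSpace Ω} {ℱ : Filtration ℝ≥0 m} {K : ℝ≥0 → Ω → ℝ}

lemma measurableSet_hitTime_le (hK : Adapted ℱ K) (hmono : ∀ ω, Monotone fun t => K t ω)
    (hrc : ∀ ω t, ContinuousWithinAt (fun s => K s ω) (Ici t) t) (v : ℝ) (t : ℝ≥0) :
    MeasurableSet[ℱ t] {ω | hitTime K v ω ≤ t} := by
  simp_rw [hitTime_le_iff (hmono _) (hrc _)]
  exact hK t measurableSet_Ici

lemma _root_.MeasureTheory.Martingale.lintegral_stoppedValue_eq_one {P : Measure Ω}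
    [IsProbabilityMeasure P] {M : ℝ≥0 → Ω → ℝ} (hM : Martingale M ℱ P)
    (hM0 : ∀ᵐ ω ∂P, M 0 ω = 1) (hM_nonneg : ∀ t ω, 0 ≤ M t ω) {σ : Ω → WithTop ℝ≥0}
    (hσ : IsStoppingTime ℱ σ) {n : ℝ≥0} (hle : ∀ ω, σ ω ≤ n) (hc : (range σ).Countable) :
    ∫⁻ ω, ENNReal.ofReal (stoppedValue M σ ω) ∂P = 1 := by
  rw [← ofReal_integral_eq_lintegral_ofReal
      (hM.integrable_stoppedValue_of_countable_range hσ hle hc) (.of_forall fun ω => hM_nonneg _ ω),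
    hM.integral_stoppedValue_of_countable_range hσ hle hc, ← setIntegral_univ,
    ← hM.setIntegral_eq zero_le MeasurableSet.univ, setIntegral_univ, integral_congr_ae hM0]
  simp

/-- Optional sampling of the localized martingales at the dyadic approximations of the stopping
time `η_v`, then Fatou's lemma. -/
lemma lintegral_L_finHitTime_le_one {P : Measure Ω} [IsProbabilityMeasure P] {L : ℝ≥0 → Ω → ℝ}
    (hK : Adapted ℱ K) (hmono : ∀ ω, Monotone fun t => K t ω)
    (hrc : ∀ ω t, ContinuousWithinAt (fun s => K s ω) (Ici t) t) (hb : ∀ t ω, K t ω ≤ 1)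
    (hL0 : ∀ t ω, 0 ≤ L t ω) (hLinit : ∀ᵐ ω ∂P, L 0 ω = 1) (hL : IsLocalMartingale ℱ P L)
    (v : ℝ) :
    ∫⁻ ω, (if v < terminal K ω then ENNReal.ofReal (L (finHitTime K v ω) ω) else 0) ∂P ≤ 1 := by
  obtain ⟨-, hLrc, τ, -, -, hτ_top, hmart⟩ := hL
  set σ : ℕ → Ω → WithTop ℝ≥0 := fun k ω => dyadicStop (hitTime K v) k ω
  have hσ (k : ℕ) : IsStoppingTime ℱ (σ k) :=
    isStoppingTime_dyadicStop (measurableSet_hitTime_le hK hmono hrc v) k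
  have hσ_le (k : ℕ) (ω : Ω) : σ k ω ≤ (k : ℝ≥0) := WithTop.coe_le_coe.2 (dyadicStop_le k ω)
  set Y : ℕ → Ω → ℝ := fun k =>
    stoppedValue (stoppedProcess L fun ω => ((τ k ω : ℝ≥0) : WithTop ℝ≥0)) (σ k)
  have hY_int (k : ℕ) : Integrable (Y k) P :=
    (hmart k).integrable_stoppedValue_of_countable_range (hσ k) (hσ_le k)
      (countable_range_dyadicStop k)
  have hY_one (k : ℕ) : ∫⁻ ω, ENNReal.ofReal (Y k ω) ∂P = 1 :=
    (hmart k).lintegral_stoppedValue_eq_one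
      (hLinit.mono fun ω hω =>
        (stoppedProcess_eq_of_le (u := L) (WithTop.coe_le_coe.2 (zero_le : 0 ≤ τ k ω))).trans hω)
      (fun _ ω => hL0 _ ω) (hσ k) (hσ_le k) (countable_range_dyadicStop k)
  have hY_lim : ∀ᵐ ω ∂P, (if v < terminal K ω then ENNReal.ofReal (L (finHitTime K v ω) ω)
      else 0) ≤ liminf (fun k => ENNReal.ofReal (Y k ω)) atTop := by
    filter_upwards [hLrc] with ω hω
    split_ifs with hv
    · have hfin := (hitTime_lt_top (hb · ω) hv).ne
      have hstop := tendsto_dyadicStop (τ := hitTime K v) hfin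
      have hY_eq : ∀ᶠ k in atTop, L (dyadicStop (hitTime K v) k ω) ω = Y k ω := by
        filter_upwards [(hstop.mono_right nhdsWithin_le_nhds).eventually
          (eventually_le_nhds (lt_add_one _)), (hτ_top ω).eventually_ge_atTop (_ + 1)]
          with k hk hτk
        exact (stoppedProcess_eq_of_le (u := L) (WithTop.coe_le_coe.2 (hk.trans hτk))).symm
      exact ((ENNReal.continuous_ofReal.tendsto _).comp
        (((hω.1 _).tendsto.comp hstop).congr' hY_eq)).liminf_eq.ge
    · exact zero_le
  calc _ ≤ ∫⁻ ω, liminf (fun k => ENNReal.ofReal (Y k ω)) atTop ∂P := lintegral_mono_ae hY_lim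
    _ ≤ liminf (fun k => ∫⁻ ω, ENNReal.ofReal (Y k ω) ∂P) atTop :=
      lintegral_liminf_le' fun k => (hY_int k).aestronglyMeasurable.aemeasurable.ennreal_ofReal
    _ = 1 := by simp [hY_one]

end DensityBound

/-- `1_{v < K_∞} L_{η_v}`, computed with the jointly measurable modification of `L`. -/
noncomputable def hitDensity {Ω : Type*} (K L : ℝ≥0 → Ω → ℝ) (v : ℝ) (ω : Ω) : ℝ≥0∞ :=
  if v < terminal K ω then ENNReal.ofReal (dyadicRightLim L (finHitTime K v ω) ω) else 0

namespace IsCanonicalPair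

variable {Ω : Type*} {m : MeasurableSpace Ω} {ℱ : Filtration ℝ≥0 m} {P : Measure Ω}
  {ρ : Ω → ℝ≥0∞} {K L : ℝ≥0 → Ω → ℝ} {κ : Ω → Measure ℝ≥0}

lemma measurable_K (hpair : IsCanonicalPair ℱ P ρ K L κ) (t : ℝ≥0) : Measurable (K t) :=
  (hpair.K_adapted t).mono (ℱ.le t) le_rfl

lemma measurable_L (hpair : IsCanonicalPair ℱ P ρ K L κ) (t : ℝ≥0) : Measurable (L t) :=
  (hpair.L_locMart.1 t).mono (ℱ.le t) le_rfl

lemma measurable_finHitTime (hpair : IsCanonicalPair ℱ P ρ K L κ) :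
    Measurable fun p : ℝ × Ω => finHitTime K p.1 p.2 :=
  measurable_finHitTime_uncurry hpair.K_mono hpair.K_rc hpair.measurable_K

lemma measurable_hitDensity (hpair : IsCanonicalPair ℱ P ρ K L κ) :
    Measurable fun p : ℝ × Ω => hitDensity K L p.1 p.2 :=
  Measurable.ite
    (measurableSet_lt measurable_fst ((measurable_terminal hpair.measurable_K).comp measurable_snd))
    ((measurable_dyadicRightLim hpair.measurable_L).comp
      (hpair.measurable_finHitTime.prodMk measurable_snd)).ennreal_ofReal
    measurable_const

lemma measurable_hitDensity_apply (hpair : IsCanonicalPair ℱ P ρ K L κ) (v : ℝ) :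
    Measurable (hitDensity K L v) :=
  hpair.measurable_hitDensity.comp (measurable_const.prodMk measurable_id)

variable [IsProbabilityMeasure P]

lemma lintegral_hitDensity_le_one (hpair : IsCanonicalPair ℱ P ρ K L κ) (v : ℝ) :
    ∫⁻ ω, hitDensity K L v ω ∂P ≤ 1 := by
  refine (lintegral_congr_ae ?_).trans_le (lintegral_L_finHitTime_le_one hpair.K_adapted
    hpair.K_mono hpair.K_rc hpair.K_le_one hpair.L_nonneg hpair.L_init hpair.L_locMart v)
  filter_upwards [hpair.L_locMart.2.1] with ω hω
  simp only [hitDensity, dyadicRightLim_eq (hω.1 _)]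

/-- The defining identity `E[V_ρ] = E[∫ V L dK]`, rewritten through the time change `t = η_v`. -/
lemma lintegral_evalT_eq (hpair : IsCanonicalPair ℱ P ρ K L κ) {V : ℝ≥0 → Ω → ℝ}
    (hV : IsOptional ℱ V) (hV0 : ∀ t ω, 0 ≤ V t ω) :
    ∫⁻ ω, ENNReal.ofReal (evalT V ρ ω) ∂P =
      ∫⁻ v in Ico 0 1, ∫⁻ ω, ENNReal.ofReal (V (finHitTime K v ω) ω) * hitDensity K L v ω ∂P := by
  have hpath : ∀ᵐ ω ∂P, ∫⁻ t, ENNReal.ofReal (V t ω * L t ω) ∂κ ω =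
      ∫⁻ v in Ico 0 1, ENNReal.ofReal (V (finHitTime K v ω) ω) * hitDensity K L v ω := by
    filter_upwards [hpair.L_locMart.2.1] with ω hω
    have hmeas : Measurable fun t =>
        ENNReal.ofReal (V t ω) * ENNReal.ofReal (dyadicRightLim L t ω) :=
      (hV.measurable_uncurry.comp (measurable_id.prodMk measurable_const)).ennreal_ofReal.mul
        ((measurable_dyadicRightLim hpair.measurable_L).comp
          (measurable_id.prodMk measurable_const)).ennreal_ofReal
    rw [lintegral_congr fun t => by rw [ENNReal.ofReal_mul (hV0 t ω), ← dyadicRightLim_eq (hω.1 t)],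
      lintegral_eq_setLIntegral_finHitTime (hpair.K_mono ω) (hpair.K_rc ω) (hpair.K_le_one · ω)
        (hpair.kappa_eq ω) hmeas]
    simp only [hitDensity, mul_ite, mul_zero]
  have hmeas : Measurable fun p : ℝ × Ω =>
      ENNReal.ofReal (V (finHitTime K p.1 p.2) p.2) * hitDensity K L p.1 p.2 :=
    (hV.measurable_uncurry.comp (hpair.measurable_finHitTime.prodMk
      measurable_snd)).ennreal_ofReal.mul hpair.measurable_hitDensity
  rw [hpair.eval_eq V hV hV0, lintegral_congr_ae hpath,
    lintegral_lintegral_swap (f := fun ω v =>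
      ENNReal.ofReal (V (finHitTime K v ω) ω) * hitDensity K L v ω)
      (hmeas.comp measurable_swap).aemeasurable]

lemma ae_lintegral_hitDensity_eq_one (hpair : IsCanonicalPair ℱ P ρ K L κ) :
    ∀ᵐ v ∂volume.restrict (Ico (0 : ℝ) 1), ∫⁻ ω, hitDensity K L v ω ∂P = 1 := by
  have htotal : ∫⁻ v in Ico 0 1, ∫⁻ ω, hitDensity K L v ω ∂P = ∫⁻ v in Ico (0 : ℝ) 1, 1 := by
    simpa [evalT] using (hpair.lintegral_evalT_eq (V := fun _ _ => 1) measurable_const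
      fun _ _ => zero_le_one).symm
  exact ae_eq_of_ae_le_of_lintegral_le (ae_of_all _ hpair.lintegral_hitDensity_le_one)
    (by simp [htotal]) aemeasurable_const htotal.ge

lemma setLIntegral_le_lintegral_evalT (hpair : IsCanonicalPair ℱ P ρ K L κ) {g : ℝ → ℝ}
    (hg : Monotone g) (hg0 : ∀ x, 0 ≤ g x) :
    ∫⁻ v in Ico 0 1, ENNReal.ofReal (g v) ≤ ∫⁻ ω, ENNReal.ofReal (g (evalT K ρ ω)) ∂P := by
  have hV : IsOptional ℱ fun t ω => g (K t ω) :=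
    hg.measurable.comp (isOptional_of_continuousWithinAt hpair.K_adapted hpair.K_rc)
  change _ ≤ ∫⁻ ω, ENNReal.ofReal (evalT (fun t ω => g (K t ω)) ρ ω) ∂P
  rw [hpair.lintegral_evalT_eq hV fun _ _ => hg0 _]
  calc ∫⁻ v in Ico 0 1, ENNReal.ofReal (g v)
      = ∫⁻ v in Ico 0 1, ∫⁻ ω, ENNReal.ofReal (g v) * hitDensity K L v ω ∂P := by
        refine lintegral_congr_ae ?_
        filter_upwards [hpair.ae_lintegral_hitDensity_eq_one] with v hv
        rw [lintegral_const_mul _ (hpair.measurable_hitDensity_apply v), hv, mul_one]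
    _ ≤ _ := lintegral_mono fun v => lintegral_mono fun ω => ?_
  by_cases hv : v < terminal K ω
  · gcongr
    exact hg (le_K_finHitTime (hpair.K_mono ω) (hpair.K_rc ω)
      (hitTime_lt_top (hpair.K_le_one · ω) hv).ne)
  · simp [hitDensity, hv]

lemma lintegral_llim_le_setLIntegral (hpair : IsCanonicalPair ℱ P ρ K L κ) {g : ℝ → ℝ}
    (hg : Monotone g) (hg0 : ∀ x, 0 ≤ g x) :
    ∫⁻ ω, ENNReal.ofReal (g (llim (fun s => K s ω) (ρ ω).toNNReal)) ∂P ≤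
      ∫⁻ v in Ico 0 1, ENNReal.ofReal (g v) := by
  have hV : IsOptional ℱ fun t ω => g (llim (fun s => K s ω) t) :=
    hg.measurable.comp (isOptional_llim hpair.K_adapted hpair.K_rc hpair.K_mono)
  change ∫⁻ ω, ENNReal.ofReal (evalT (fun t ω => g (llim (fun s => K s ω) t)) ρ ω) ∂P ≤ _
  rw [hpair.lintegral_evalT_eq hV fun _ _ => hg0 _]
  calc _ ≤ ∫⁻ v in Ico 0 1, ∫⁻ ω, ENNReal.ofReal (g v) * hitDensity K L v ω ∂P :=
        setLIntegral_mono' measurableSet_Ico fun v hv => lintegral_mono fun ω => by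
          gcongr
          exact hg (llim_K_finHitTime_le (hpair.K_mono ω) hv.1)
    _ = ∫⁻ v in Ico 0 1, ENNReal.ofReal (g v) * ∫⁻ ω, hitDensity K L v ω ∂P :=
        lintegral_congr fun v => lintegral_const_mul _ (hpair.measurable_hitDensity_apply v)
    _ ≤ _ := lintegral_mono fun v => mul_le_of_le_one_right' (hpair.lintegral_hitDensity_le_one v)

end IsCanonicalPair

section ClampShift

noncomputable def clampShift (f : ℝ → ℝ) (x : ℝ) : ℝ := f (projIcc 0 1 zero_le_one x) - f 0

variable {f : ℝ → ℝ}

lemma clampShift_of_mem {x : ℝ} (hx : x ∈ Icc (0 : ℝ) 1) : clampShift f x = f x - f 0 := by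
  simp [clampShift, projIcc_of_mem _ hx]

lemma monotone_clampShift (hf : MonotoneOn f (Icc 0 1)) : Monotone (clampShift f) :=
  fun _ _ hxy => sub_le_sub_right (hf (projIcc _ _ _ _).2 (projIcc _ _ _ _).2
    (monotone_projIcc zero_le_one hxy)) _

lemma clampShift_nonneg (hf : MonotoneOn f (Icc 0 1)) (x : ℝ) : 0 ≤ clampShift f x :=
  sub_nonneg.2 (hf (left_mem_Icc.2 zero_le_one) (projIcc _ _ _ _).2 (projIcc _ _ _ _).2.1)

lemma clampShift_le (hf : MonotoneOn f (Icc 0 1)) (x : ℝ) : clampShift f x ≤ f 1 - f 0 :=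
  sub_le_sub_right (hf (projIcc _ _ _ _).2 (right_mem_Icc.2 zero_le_one) (projIcc _ _ _ _).2.2) _

variable {α β : Type*} [MeasurableSpace α] [MeasurableSpace β] {μ : Measure α} {ν : Measure β}
  [IsProbabilityMeasure μ] [IsProbabilityMeasure ν] {X : α → ℝ} {Y : β → ℝ}

lemma integrable_clampShift_comp (hf : MonotoneOn f (Icc 0 1)) (hX : AEMeasurable X μ) :
    Integrable (fun a => clampShift f (X a)) μ :=
  .of_bound ((monotone_clampShift hf).measurable.comp_aemeasurable hX).aestronglyMeasurable
    (f 1 - f 0) (ae_of_all _ fun a => by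
      rw [Real.norm_of_nonneg (clampShift_nonneg hf _)]
      exact clampShift_le hf _)

lemma integral_comp_eq_integral_clampShift_add (hf : MonotoneOn f (Icc 0 1))
    (hX : AEMeasurable X μ) (hX01 : ∀ᵐ a ∂μ, X a ∈ Icc 0 1) :
    ∫ a, f (X a) ∂μ = ∫ a, clampShift f (X a) ∂μ + f 0 := by
  have hae : (fun a => f (X a)) =ᵐ[μ] fun a => clampShift f (X a) + f 0 :=
    hX01.mono fun a ha => by simp [clampShift_of_mem ha]
  rw [integral_congr_ae hae, integral_add (integrable_clampShift_comp hf hX) (integrable_const _),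
    integral_const, probReal_univ, one_smul]

lemma integral_comp_le_of_lintegral_clampShift_le (hf : MonotoneOn f (Icc 0 1))
    (hX : AEMeasurable X μ) (hY : AEMeasurable Y ν) (hX01 : ∀ᵐ a ∂μ, X a ∈ Icc 0 1)
    (hY01 : ∀ᵐ b ∂ν, Y b ∈ Icc 0 1)
    (h : ∫⁻ a, ENNReal.ofReal (clampShift f (X a)) ∂μ ≤
      ∫⁻ b, ENNReal.ofReal (clampShift f (Y b)) ∂ν) :
    ∫ a, f (X a) ∂μ ≤ ∫ b, f (Y b) ∂ν := by
  rwa [integral_comp_eq_integral_clampShift_add hf hX hX01,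
    integral_comp_eq_integral_clampShift_add hf hY hY01, add_le_add_iff_right,
    ← ENNReal.ofReal_le_ofReal_iff (integral_nonneg fun _ => clampShift_nonneg hf _),
    ofReal_integral_eq_lintegral_ofReal (integrable_clampShift_comp hf hX)
      (ae_of_all _ fun _ => clampShift_nonneg hf _),
    ofReal_integral_eq_lintegral_ofReal (integrable_clampShift_comp hf hY)
      (ae_of_all _ fun _ => clampShift_nonneg hf _)]

end ClampShift

theorem K_at_random_time_dominates_uniform_general
    {Ω : Type*} {m : MeasurableSpace Ω}
    (ℱ : Filtration ℝ≥0 m)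
    (P : Measure Ω) [IsProbabilityMeasure P]
    (ρ : Ω → ℝ≥0∞) (hρmeas : Measurable ρ)
    (K L : ℝ≥0 → Ω → ℝ) (κ : Ω → Measure ℝ≥0)
    (hpair : IsCanonicalPair ℱ P ρ K L κ)
    (f : ℝ → ℝ) (hf : MonotoneOn f (Set.Icc (0:ℝ) 1)) :
    (∫ ω, f (llim (fun s => K s ω) (ρ ω).toNNReal) ∂P ≤ ∫ u in Set.Ico (0:ℝ) 1, f u) ∧
    (∫ u in Set.Ico (0:ℝ) 1, f u ≤ ∫ ω, f (evalT K ρ ω) ∂P) := by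
  have : IsProbabilityMeasure (volume.restrict (Ico (0 : ℝ) 1)) := ⟨by simp⟩
  have hKρ : Measurable (evalT K ρ) :=
    (isOptional_of_continuousWithinAt hpair.K_adapted hpair.K_rc).measurable_evalT hρmeas
  have hKρ_left : Measurable fun ω => llim (fun s => K s ω) (ρ ω).toNNReal :=
    (isOptional_llim hpair.K_adapted hpair.K_rc hpair.K_mono).measurable_evalT hρmeas
  have hKρ_mem : ∀ ω, evalT K ρ ω ∈ Icc (0 : ℝ) 1 :=
    fun ω => ⟨hpair.K_nonneg _ ω, hpair.K_le_one _ ω⟩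
  have hKρ_left_mem : ∀ ω, llim (fun s => K s ω) (ρ ω).toNNReal ∈ Icc (0 : ℝ) 1 := fun ω =>
    ⟨llim_nonneg (hpair.K_mono ω) (hpair.K_nonneg · ω) _,
      (llim_le_self (hpair.K_mono ω) (hpair.K_nonneg · ω) _).trans (hpair.K_le_one _ ω)⟩
  have hunif : ∀ᵐ u ∂volume.restrict (Ico (0 : ℝ) 1), id u ∈ Icc (0 : ℝ) 1 :=
    (ae_restrict_mem measurableSet_Ico).mono fun _ hu => Ico_subset_Icc_self hu
  exact ⟨integral_comp_le_of_lintegral_clampShift_le hf hKρ_left.aemeasurable aemeasurable_id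
      (ae_of_all _ hKρ_left_mem) hunif (hpair.lintegral_llim_le_setLIntegral
        (monotone_clampShift hf) (clampShift_nonneg hf)),
    integral_comp_le_of_lintegral_clampShift_le hf aemeasurable_id hKρ.aemeasurable hunif
      (ae_of_all _ hKρ_mem) (hpair.setLIntegral_le_lintegral_evalT
        (monotone_clampShift hf) (clampShift_nonneg hf))⟩

/-- Proposition: uniform stochastic domination.
For the canonical pair `(K, L)` of a random time `ρ`, and every nondecreasing
`f : [0,1) → ℝ` (formalized as a function monotone on `[0,1]`, since `K` takes values
in `[0,1]`): `E_P[f(K_{ρ-})] ≤ ∫_{[0,1)} f(u) du ≤ E_P[f(K_ρ)]`. That is, the law of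
`K_{ρ-}` is first-order dominated by the standard uniform law, which in turn is
first-order dominated by the law of `K_ρ`. -/
theorem K_at_random_time_dominates_uniform
    {Ω : Type*} {m : MeasurableSpace Ω}
    (ℱ : Filtration ℝ≥0 m) (hℱ : RightContFiltration ℱ)
    (P : Measure Ω) [IsProbabilityMeasure P]
    (ρ : Ω → ℝ≥0∞) (hρmeas : Measurable ρ) (hρfin : ∀ᵐ ω ∂P, ρ ω < ⊤)
    (K L : ℝ≥0 → Ω → ℝ) (κ : Ω → Measure ℝ≥0)
    (hpair : IsCanonicalPair ℱ P ρ K L κ)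
    (f : ℝ → ℝ) (hf : MonotoneOn f (Set.Icc (0:ℝ) 1)) :
    (∫ ω, f (llim (fun s => K s ω) (ρ ω).toNNReal) ∂P ≤ ∫ u in Set.Ico (0:ℝ) 1, f u) ∧
    (∫ u in Set.Ico (0:ℝ) 1, f u ≤ ∫ ω, f (evalT K ρ ω) ∂P) :=
  K_at_random_time_dominates_uniform_general ℱ P ρ hρmeas K L κ hpair f hf

end RandTimes
end
end

section
/- In the finite-horizon discrete-time setting, let X be an adapted process such that P[X_t ≥ X_{t−1} | F_{t−1}] > 0 holds P-a.s. for all t ∈ 𝕋\{0}, and set ρ := max{t ∈ 𝕋 : X_t = max_{s∈𝕋} X_s}, the last time at which X attains its overall maximum. Let Q be the probability on (Ω, F) with density L_T with respect to P, where L is the discrete-time martingale L_0 = 1, L_t = L_{t−1} · P[ρ ≥ t | F_t] / P[ρ ≥ t | F_{t−1}] for t ≤ ζ₀ := min{t : P[ρ > t | F_t] = 0} and constant afterwards. Then Q[ρ = T] = 1. -/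
open MeasureTheory Filter Set ProbabilityTheory
open scoped ENNReal NNReal Topology

noncomputable section

namespace RandTimesDiscrete

/-! Write `D t = P[ρ > t | ℱ t]` and `N t = P[ρ ≥ t | ℱ t]`. Every step `X t ≤ X (t + 1)` has
positive conditional probability, so from any `ℱ t`-event on which `X t` is a running maximum the
path can climb to a global maximum at `T`; hence `D t > 0` a.s. on `{ρ ≥ t}` for `t < T`. Then
`ζ₀ = T` on `{ρ = T}`, where `L T = ∏_{s < T} N (s + 1) / D s`. Conditioning on `ℱ (s + 1)` and
then on `ℱ s` shows that the factor `N (s + 1) / D s` preserves the `P`-integral, up to the mass of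
`{D s = 0}`, which the positivity makes negligible; so the product has integral one. Finally,
`{ρ = T}` is `ℱ T`-measurable, `N T = 1_{ρ = T}` and the product vanishes off `{ρ = T}`. -/

section Conditioning

variable {Ω : Type*} {m m₀ : MeasurableSpace Ω} {μ : Measure[m₀] Ω}

lemma lintegral_mul_eq_of_forall_setLIntegral_eq (hm : m ≤ m₀) {f g φ : Ω → ℝ≥0∞}
    (hf : Measurable f) (hg : Measurable g)
    (hfg : ∀ S, MeasurableSet[m] S → ∫⁻ ω in S, f ω ∂μ = ∫⁻ ω in S, g ω ∂μ)
    (hφ : Measurable[m] φ) :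
    ∫⁻ ω, f ω * φ ω ∂μ = ∫⁻ ω, g ω * φ ω ∂μ := by
  have htrim : (μ.withDensity f).trim hm = (μ.withDensity g).trim hm := by
    refine @Measure.ext _ m _ _ fun S hS => ?_
    rw [trim_measurableSet_eq hm hS, trim_measurableSet_eq hm hS,
      withDensity_apply _ (hm S hS), withDensity_apply _ (hm S hS), hfg S hS]
  calc ∫⁻ ω, f ω * φ ω ∂μ = ∫⁻ ω, φ ω ∂(μ.withDensity f) :=
        (lintegral_withDensity_eq_lintegral_mul _ hf (hφ.mono hm le_rfl)).symm
    _ = ∫⁻ ω, φ ω ∂(μ.withDensity g) := by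
      rw [← lintegral_trim hm hφ, htrim, lintegral_trim hm hφ]
    _ = ∫⁻ ω, g ω * φ ω ∂μ := lintegral_withDensity_eq_lintegral_mul _ hg (hφ.mono hm le_rfl)

lemma condExp_indicator_nonneg (s : Set Ω) : 0 ≤ᵐ[μ] μ⟦s | m⟧ :=
  condExp_nonneg (ae_of_all _ fun ω => indicator_nonneg (fun _ _ => zero_le_one) ω)

variable [IsFiniteMeasure μ] {s : Set Ω}

lemma lintegral_ofReal_condExp_indicator_mul (hm : m ≤ m₀) (hs : MeasurableSet s)
    {φ : Ω → ℝ≥0∞} (hφ : Measurable[m] φ) :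
    ∫⁻ ω, ENNReal.ofReal ((μ⟦s | m⟧) ω) * φ ω ∂μ = ∫⁻ ω in s, φ ω ∂μ := by
  have hind : ∀ ω, ENNReal.ofReal (s.indicator (fun _ => (1 : ℝ)) ω) = s.indicator 1 ω :=
    fun ω => by by_cases hω : ω ∈ s <;> simp [hω]
  have hset : ∀ S, MeasurableSet[m] S → ∫⁻ ω in S, ENNReal.ofReal ((μ⟦s | m⟧) ω) ∂μ
      = ∫⁻ ω in S, s.indicator 1 ω ∂μ := fun S hS => by
    rw [setLIntegral_congr_fun_ae (hm S hS) ((condLExp_ofReal m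
        ((integrable_const 1).indicator hs)
        (ae_of_all _ fun ω => indicator_nonneg (fun _ _ => zero_le_one) ω)).mono
          fun ω h _ => h.symm),
      setLIntegral_condLExp hm _ _ hS]
    simp only [hind]
  rw [lintegral_mul_eq_of_forall_setLIntegral_eq hm
      (stronglyMeasurable_condExp.measurable.mono hm le_rfl).ennreal_ofReal
      (measurable_const.indicator hs) hset hφ, ← lintegral_indicator hs]
  congr 1 with ω
  by_cases hω : ω ∈ s <;> simp [hω]

lemma measure_inter_condExp_indicator_eq_zero (hm : m ≤ m₀) (hs : MeasurableSet s) :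
    μ (s ∩ {ω | (μ⟦s | m⟧) ω = 0}) = 0 := by
  have hS : MeasurableSet[m] {ω | (μ⟦s | m⟧) ω = 0} :=
    stronglyMeasurable_condExp.measurable (measurableSet_singleton 0)
  have h := lintegral_ofReal_condExp_indicator_mul hm hs (μ := μ) (measurable_const.indicator hS)
    (φ := {ω | (μ⟦s | m⟧) ω = 0}.indicator 1)
  rw [lintegral_indicator_one (hm _ hS), Measure.restrict_apply (hm _ hS)] at h
  rw [inter_comm, ← h, ← lintegral_zero]
  congr 1 with ω
  by_cases hω : (μ⟦s | m⟧) ω = 0 <;> simp [hω]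

lemma measure_eq_zero_of_measure_inter_eq_zero (hm : m ≤ m₀) (hs : MeasurableSet s)
    (hpos : ∀ᵐ ω ∂μ, 0 < (μ⟦s | m⟧) ω) {E : Set Ω} (hE : MeasurableSet[m] E)
    (hEs : μ (E ∩ s) = 0) : μ E = 0 := by
  have h := lintegral_ofReal_condExp_indicator_mul hm hs (μ := μ) (measurable_const.indicator hE)
    (φ := E.indicator 1)
  have hmeas : Measurable fun ω => ENNReal.ofReal ((μ⟦s | m⟧) ω) * E.indicator 1 ω :=
    (stronglyMeasurable_condExp.measurable.mono hm le_rfl).ennreal_ofReal.mul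
      (measurable_const.indicator (hm _ hE))
  rw [lintegral_indicator_one (hm _ hE), Measure.restrict_apply (hm _ hE), hEs,
    lintegral_eq_zero_iff hmeas] at h
  rw [measure_eq_zero_iff_ae_notMem]
  filter_upwards [h, hpos] with ω hω hω_pos hωE
  simp only [hωE, indicator_of_mem, Pi.one_apply, mul_one, Pi.zero_apply,
    ENNReal.ofReal_eq_zero] at hω
  exact hω.not_gt hω_pos

end Conditioning

lemma measure_eq_zero_of_measure_inter_iInter_eq_zero {Ω : Type*} {m : MeasurableSpace Ω}
    {ℱ : Filtration ℕ m} {μ : Measure Ω} [IsFiniteMeasure μ] {T : ℕ} {B : ℕ → Set Ω}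
    (hB : ∀ u, MeasurableSet[ℱ (u + 1)] (B u))
    (hpos : ∀ u < T, ∀ᵐ ω ∂μ, 0 < (μ⟦B u | ℱ u⟧) ω) {t : ℕ} {E : Set Ω}
    (hE : MeasurableSet[ℱ t] E) (hEB : μ (E ∩ ⋂ u ∈ Ico t T, B u) = 0) : μ E = 0 := by
  induction hk : T - t generalizing t E with
  | zero =>
    rwa [Ico_eq_empty (by omega), biInter_empty, inter_univ] at hEB
  | succ k ih =>
    have hEB' : μ ((E ∩ B t) ∩ ⋂ u ∈ Ico (t + 1) T, B u) = 0 := by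
      refine measure_mono_null ?_ hEB
      rintro ω ⟨⟨hωE, hωt⟩, hω⟩
      refine ⟨hωE, ?_⟩
      simp only [mem_iInter, mem_Ico] at hω ⊢
      intro u hu
      rcases hu.1.eq_or_lt with rfl | hlt
      · exact hωt
      · exact hω u ⟨hlt, hu.2⟩
    refine measure_eq_zero_of_measure_inter_eq_zero (ℱ.le t) (ℱ.le _ _ (hB t))
      (hpos t (by omega)) hE ?_
    exact ih ((ℱ.mono t.le_succ _ hE).inter (hB t)) hEB' (by omega)

section LastTime

variable {Ω : Type*} {m : MeasurableSpace Ω} {ℱ : Filtration ℕ m} {P : Measure Ω} {ρ : Ω → ℕ}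

variable (ℱ P ρ) in
/-- The density `L` of the paper before it is frozen at `ζ₀`; since `x / 0 = 0` in Lean, it
vanishes from the first time `s` with `P[ρ > s | ℱ s] = 0` on. -/
def densityProduct (t : ℕ) (ω : Ω) : ℝ :=
  ∏ s ∈ Finset.range t, (P⟦{ω | s + 1 ≤ ρ ω} | ℱ (s + 1)⟧) ω / (P⟦{ω | s + 1 ≤ ρ ω} | ℱ s⟧) ω

lemma densityProduct_zero (ω : Ω) : densityProduct ℱ P ρ 0 ω = 1 := Finset.prod_range_zero _

lemma densityProduct_succ (t : ℕ) (ω : Ω) :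
    densityProduct ℱ P ρ (t + 1) ω = densityProduct ℱ P ρ t ω *
      ((P⟦{ω | t + 1 ≤ ρ ω} | ℱ (t + 1)⟧) ω / (P⟦{ω | t + 1 ≤ ρ ω} | ℱ t⟧) ω) :=
  Finset.prod_range_succ _ t

lemma measurable_densityProduct (t : ℕ) : Measurable[ℱ t] (densityProduct ℱ P ρ t) :=
  Finset.measurable_prod _ fun _ hs =>
    (stronglyMeasurable_condExp.measurable.mono (ℱ.mono (Finset.mem_range.1 hs)) le_rfl).div
      (stronglyMeasurable_condExp.measurable.mono (ℱ.mono (Finset.mem_range.1 hs).le) le_rfl)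

lemma lintegral_densityProduct_succ [IsFiniteMeasure P] (hρm : Measurable ρ) (t : ℕ) :
    ∫⁻ ω, ENNReal.ofReal (densityProduct ℱ P ρ (t + 1) ω) ∂P
      = ∫⁻ ω in {ω | (P⟦{ω | t + 1 ≤ ρ ω} | ℱ t⟧) ω = 0}ᶜ,
          ENNReal.ofReal (densityProduct ℱ P ρ t ω) ∂P := by
  set D := P⟦{ω | t + 1 ≤ ρ ω} | ℱ t⟧
  have hA : MeasurableSet {ω | t + 1 ≤ ρ ω} := hρm measurableSet_Ici
  have hD : Measurable[ℱ t] D := stronglyMeasurable_condExp.measurable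
  have hS : MeasurableSet[ℱ t] {ω | D ω = 0} := hD (measurableSet_singleton 0)
  have hψ : Measurable[ℱ t] fun ω => ENNReal.ofReal (densityProduct ℱ P ρ t ω / D ω) :=
    (measurable_densityProduct t |>.div hD).ennreal_ofReal
  calc ∫⁻ ω, ENNReal.ofReal (densityProduct ℱ P ρ (t + 1) ω) ∂P
      = ∫⁻ ω, ENNReal.ofReal ((P⟦{ω | t + 1 ≤ ρ ω} | ℱ (t + 1)⟧) ω)
          * ENNReal.ofReal (densityProduct ℱ P ρ t ω / D ω) ∂P := by
        refine lintegral_congr_ae ?_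
        filter_upwards [condExp_indicator_nonneg (μ := P) (m := ℱ (t + 1)) {ω | t + 1 ≤ ρ ω}]
          with ω hN
        rw [densityProduct_succ, ← ENNReal.ofReal_mul hN, mul_div_left_comm]
    _ = ∫⁻ ω in {ω | t + 1 ≤ ρ ω}, ENNReal.ofReal (densityProduct ℱ P ρ t ω / D ω) ∂P :=
        lintegral_ofReal_condExp_indicator_mul (ℱ.le _) hA (hψ.mono (ℱ.mono t.le_succ) le_rfl)
    _ = ∫⁻ ω, ENNReal.ofReal (D ω) * ENNReal.ofReal (densityProduct ℱ P ρ t ω / D ω) ∂P :=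
        (lintegral_ofReal_condExp_indicator_mul (ℱ.le t) hA hψ).symm
    _ = ∫⁻ ω in {ω | D ω = 0}ᶜ, ENNReal.ofReal (densityProduct ℱ P ρ t ω) ∂P := by
        rw [← lintegral_indicator (ℱ.le t _ hS).compl]
        refine lintegral_congr_ae ?_
        filter_upwards [condExp_indicator_nonneg (μ := P) (m := ℱ t) {ω | t + 1 ≤ ρ ω}]
          with ω hDω
        by_cases h0 : D ω = 0
        · simp [h0]
        · rw [indicator_of_mem (show ω ∈ {ω | D ω = 0}ᶜ from h0), ← ENNReal.ofReal_mul hDω,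
            mul_div_cancel₀ _ h0]

lemma setLIntegral_densityProduct_eq_zero [IsFiniteMeasure P] (hρm : Measurable ρ) (t : ℕ)
    (hnull : P ({ω | t ≤ ρ ω} ∩ {ω | (P⟦{ω | t + 1 ≤ ρ ω} | ℱ t⟧) ω = 0}) = 0) :
    ∫⁻ ω in {ω | (P⟦{ω | t + 1 ≤ ρ ω} | ℱ t⟧) ω = 0},
      ENNReal.ofReal (densityProduct ℱ P ρ t ω) ∂P = 0 := by
  set S := {ω | (P⟦{ω | t + 1 ≤ ρ ω} | ℱ t⟧) ω = 0}
  have hS : MeasurableSet[ℱ t] S :=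
    stronglyMeasurable_condExp.measurable (measurableSet_singleton 0)
  cases t with
  | zero =>
    simpa [densityProduct_zero, Measure.restrict_apply] using hnull
  | succ t =>
    have hA : MeasurableSet {ω | t + 1 ≤ ρ ω} := hρm measurableSet_Ici
    set ψ := fun ω => ENNReal.ofReal
      (densityProduct ℱ P ρ t ω / (P⟦{ω | t + 1 ≤ ρ ω} | ℱ t⟧) ω)
    have hψ : Measurable[ℱ (t + 1)] (S.indicator ψ) :=
      ((measurable_densityProduct t |>.div stronglyMeasurable_condExp.measurable).ennreal_ofReal
        |>.mono (ℱ.mono t.le_succ) le_rfl).indicator hS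
    calc ∫⁻ ω in S, ENNReal.ofReal (densityProduct ℱ P ρ (t + 1) ω) ∂P
        = ∫⁻ ω, ENNReal.ofReal ((P⟦{ω | t + 1 ≤ ρ ω} | ℱ (t + 1)⟧) ω) * S.indicator ψ ω ∂P := by
          rw [← lintegral_indicator (ℱ.le _ _ hS)]
          refine lintegral_congr_ae ?_
          filter_upwards [condExp_indicator_nonneg (μ := P) (m := ℱ (t + 1)) {ω | t + 1 ≤ ρ ω}]
            with ω hN
          by_cases hω : ω ∈ S
          · rw [indicator_of_mem hω, indicator_of_mem hω, densityProduct_succ,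
              ← ENNReal.ofReal_mul hN, mul_div_left_comm]
          · simp [hω]
      _ = ∫⁻ ω in {ω | t + 1 ≤ ρ ω} ∩ S, ψ ω ∂P := by
          rw [lintegral_ofReal_condExp_indicator_mul (ℱ.le _) hA hψ,
            lintegral_indicator (ℱ.le _ _ hS), Measure.restrict_restrict (ℱ.le _ _ hS), inter_comm]
      _ = 0 := setLIntegral_measure_zero _ _ hnull

lemma lintegral_densityProduct_eq_one [IsProbabilityMeasure P] (hρm : Measurable ρ) (t : ℕ)
    (hnull : ∀ s < t, P ({ω | s ≤ ρ ω} ∩ {ω | (P⟦{ω | s + 1 ≤ ρ ω} | ℱ s⟧) ω = 0}) = 0) :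
    ∫⁻ ω, ENNReal.ofReal (densityProduct ℱ P ρ t ω) ∂P = 1 := by
  induction t with
  | zero => simp [densityProduct_zero]
  | succ t ih =>
    have hS : MeasurableSet {ω | (P⟦{ω | t + 1 ≤ ρ ω} | ℱ t⟧) ω = 0} :=
      ℱ.le t _ (stronglyMeasurable_condExp.measurable (measurableSet_singleton 0))
    rw [lintegral_densityProduct_succ hρm, ← ih fun s hs => hnull s (by omega),
      ← lintegral_add_compl (μ := P) _ hS,
      setLIntegral_densityProduct_eq_zero hρm t (hnull t t.lt_succ_self), zero_add]

section Horizon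

variable {X : ℕ → Ω → ℝ} {T : ℕ}

variable (ρ X T) in
def IsLastArgmax : Prop :=
  ∀ ω, ρ ω ≤ T ∧ (∀ t ≤ T, X t ω ≤ X (ρ ω) ω) ∧
    (∀ t ≤ T, (∀ s ≤ T, X s ω ≤ X t ω) → t ≤ ρ ω)

lemma IsLastArgmax.le_iff (hρ : IsLastArgmax ρ X T) (ω : Ω) :
    T ≤ ρ ω ↔ ∀ s ≤ T, X s ω ≤ X T ω := by
  refine ⟨fun h s hs => ?_, (hρ ω).2.2 T le_rfl⟩
  simpa [le_antisymm (hρ ω).1 h] using (hρ ω).2.1 s hs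

lemma IsLastArgmax.measurableSet_horizon_le (hρ : IsLastArgmax ρ X T) (hX : Adapted ℱ X) :
    MeasurableSet[ℱ T] {ω | T ≤ ρ ω} := by
  simp_rw [hρ.le_iff, ofPred_forall]
  exact MeasurableSet.iInter fun s => MeasurableSet.iInter fun hs =>
    measurableSet_le ((hX s).mono (ℱ.mono hs) le_rfl) (hX T)

/-- If `X` reaches its running maximum at `t` and then climbs to `T`, then `ρ = T`; the positive
conditional probability of each step makes such a climb possible from every `ℱ t`-event. -/
lemma measure_le_inter_condExp_eq_zero [IsFiniteMeasure P] (hX : Adapted ℱ X)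
    (hXpos : ∀ t < T, ∀ᵐ ω ∂P, 0 < (P⟦{ω | X t ω ≤ X (t + 1) ω} | ℱ t⟧) ω)
    (hρ : IsLastArgmax ρ X T) (hρm : Measurable ρ) {t : ℕ} (ht : t < T) :
    P ({ω | t ≤ ρ ω} ∩ {ω | (P⟦{ω | t + 1 ≤ ρ ω} | ℱ t⟧) ω = 0}) = 0 := by
  set S := {ω | (P⟦{ω | t + 1 ≤ ρ ω} | ℱ t⟧) ω = 0}
  set E := S ∩ {ω | ∀ s ≤ t, X s ω ≤ X t ω}
  have hE : MeasurableSet[ℱ t] E := by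
    refine (stronglyMeasurable_condExp.measurable (measurableSet_singleton 0)).inter ?_
    simp_rw [ofPred_forall]
    exact MeasurableSet.iInter fun s => MeasurableSet.iInter fun hs =>
      measurableSet_le ((hX s).mono (ℱ.mono hs) le_rfl) (hX t)
  have hclimb : E ∩ ⋂ u ∈ Ico t T, {ω | X u ω ≤ X (u + 1) ω} ⊆ {ω | t + 1 ≤ ρ ω} ∩ S := by
    rintro ω ⟨⟨hωS, hωmax⟩, hω⟩
    simp only [mem_iInter, mem_Ico, mem_ofPred_eq] at hω
    have hmono : MonotoneOn (X · ω) (Icc t T) := monotoneOn_of_le_succ ordConnected_Icc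
      fun u _ hu hu' => by simpa using hω u ⟨hu.1, Order.succ_le_iff.1 hu'.2⟩
    have hT : T ≤ ρ ω := (hρ.le_iff ω).2 fun s hs => by
      rcases le_total s t with hst | hts
      · exact (hωmax s hst).trans (hmono ⟨le_rfl, ht.le⟩ ⟨ht.le, le_rfl⟩ ht.le)
      · exact hmono ⟨hts, hs⟩ ⟨ht.le, le_rfl⟩ hs
    exact ⟨ht.trans_le hT, hωS⟩
  have hEnull : P E = 0 :=
    measure_eq_zero_of_measure_inter_iInter_eq_zero
      (fun u => measurableSet_le ((hX u).mono (ℱ.mono u.le_succ) le_rfl)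
        (hX (u + 1))) hXpos hE
      (measure_mono_null hclimb
        (measure_inter_condExp_indicator_eq_zero (ℱ.le t) (hρm measurableSet_Ici)))
  refine measure_mono_null (t := E ∪ ({ω | t + 1 ≤ ρ ω} ∩ S)) ?_ (measure_union_null hEnull
    (measure_inter_condExp_indicator_eq_zero (ℱ.le t) (hρm measurableSet_Ici)))
  rintro ω ⟨htρ : t ≤ ρ ω, hωS⟩
  rcases htρ.eq_or_lt with hρt | hρt
  · exact Or.inl ⟨hωS, fun s hs => hρt ▸ (hρ ω).2.1 s (hs.trans ht.le)⟩
  · exact Or.inr ⟨hρt, hωS⟩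

lemma ae_forall_le_eq_densityProduct {L : ℕ → Ω → ℝ} {ζ : Ω → ℕ} (hL0 : ∀ ω, L 0 ω = 1)
    (hLrec : ∀ t : ℕ, ∀ᵐ ω ∂P, t + 1 ≤ ζ ω → L (t + 1) ω =
      L t ω * (P⟦{ω | t + 1 ≤ ρ ω} | ℱ (t + 1)⟧) ω / (P⟦{ω | t + 1 ≤ ρ ω} | ℱ t⟧) ω) :
    ∀ᵐ ω ∂P, ∀ t ≤ ζ ω, L t ω = densityProduct ℱ P ρ t ω := by
  filter_upwards [ae_all_iff.2 hLrec] with ω hω t ht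
  induction t with
  | zero => rw [hL0, densityProduct_zero]
  | succ t ih => rw [hω t ht, ih (by omega), densityProduct_succ, mul_div_assoc]

lemma setLIntegral_densityProduct_horizon
    (hA : MeasurableSet[ℱ T] {ω | T ≤ ρ ω}) [IsFiniteMeasure P] :
    ∫⁻ ω in {ω | T ≤ ρ ω}, ENNReal.ofReal (densityProduct ℱ P ρ T ω) ∂P
      = ∫⁻ ω, ENNReal.ofReal (densityProduct ℱ P ρ T ω) ∂P := by
  cases T with
  | zero => simp
  | succ t =>
    have hN : P⟦{ω | t + 1 ≤ ρ ω} | ℱ (t + 1)⟧ = {ω | t + 1 ≤ ρ ω}.indicator fun _ => 1 :=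
      condExp_of_stronglyMeasurable (ℱ.le _) (stronglyMeasurable_const.indicator hA)
        ((integrable_const (1 : ℝ)).indicator (ℱ.le _ _ hA))
    rw [← lintegral_indicator (ℱ.le _ _ hA)]
    congr 1 with ω
    by_cases hω : ω ∈ {ω | t + 1 ≤ ρ ω}
    · exact indicator_of_mem hω _
    · rw [indicator_of_notMem hω, densityProduct_succ, hN, indicator_of_notMem hω, zero_div,
        mul_zero, ENNReal.ofReal_zero]

lemma ae_sInf_eq_horizon [IsFiniteMeasure P] (hX : Adapted ℱ X)
    (hXpos : ∀ t < T, ∀ᵐ ω ∂P, 0 < (P⟦{ω | X t ω ≤ X (t + 1) ω} | ℱ t⟧) ω)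
    (hρ : IsLastArgmax ρ X T) (hρm : Measurable ρ) {Z : ℕ → Ω → ℝ}
    (hZ : ∀ t, Z t =ᵐ[P] P⟦{ω | t < ρ ω} | ℱ t⟧) :
    ∀ᵐ ω ∂P, T ≤ ρ ω → sInf {t | Z t ω = 0} = T := by
  have hZT : Z T =ᵐ[P] 0 := by
    have hempty : {ω | T < ρ ω} = ∅ := eq_empty_of_forall_notMem fun ω h => (hρ ω).1.not_gt h
    simpa only [hempty, indicator_empty', condExp_zero] using hZ T
  have hZpos : ∀ᵐ ω ∂P, ∀ s, s < T → s ≤ ρ ω → Z s ω ≠ 0 := by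
    refine ae_all_iff.2 fun s => ?_
    by_cases hs : s < T
    · have h := measure_eq_zero_iff_ae_notMem.1
        (measure_le_inter_condExp_eq_zero hX hXpos hρ hρm hs)
      filter_upwards [h, hZ s] with ω hω hZω _ hsρ hZ0
      exact hω ⟨hsρ, hZω.symm.trans hZ0⟩
    · exact ae_of_all _ fun ω h => absurd h hs
  filter_upwards [hZT, hZpos] with ω hT hpos hTρ
  refine le_antisymm (Nat.sInf_le hT) (le_csInf ⟨T, hT⟩ fun u hu => ?_)
  by_contra! hu'
  exact hpos u hu' (hu'.le.trans hTρ) hu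

end Horizon

end LastTime

theorem last_time_of_maximum_discrete_general
    {Ω : Type*} {m : MeasurableSpace Ω}
    (ℱ : Filtration ℕ m) (P : Measure Ω) [IsProbabilityMeasure P] (T : ℕ)
    (X : ℕ → Ω → ℝ) (hXadapted : Adapted ℱ X)
    (hXpos : ∀ t : ℕ, t < T → ∀ᵐ ω ∂P,
      0 < (P[({ω' | X t ω' ≤ X (t+1) ω'}.indicator fun _ => (1:ℝ)) | ℱ t]) ω)
    (ρ : Ω → ℕ) (hρmeas : Measurable ρ)
    (hρdef : ∀ ω, ρ ω ≤ T ∧ (∀ t ≤ T, X t ω ≤ X (ρ ω) ω) ∧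
      (∀ t ≤ T, (∀ s ≤ T, X s ω ≤ X t ω) → t ≤ ρ ω))
    (Z : ℕ → Ω → ℝ)
    (hZ : ∀ t : ℕ,
      Z t =ᵐ[P] P[({ω | t < ρ ω}.indicator fun _ => (1:ℝ)) | ℱ t])
    (ζ : Ω → ℕ) (hζdef : ∀ ω, ζ ω = sInf {t : ℕ | Z t ω = 0})
    (L : ℕ → Ω → ℝ)
    (hL0 : ∀ ω, L 0 ω = 1)
    (hLrec : ∀ t : ℕ, ∀ᵐ ω ∂P, t + 1 ≤ ζ ω →
      L (t+1) ω = L t ω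
        * (P[({ω' | t + 1 ≤ ρ ω'}.indicator fun _ => (1:ℝ)) | ℱ (t+1)]) ω
        / (P[({ω' | t + 1 ≤ ρ ω'}.indicator fun _ => (1:ℝ)) | ℱ t]) ω)
    (Q : Measure Ω)
    (hQ : Q = P.withDensity fun ω => ENNReal.ofReal (L T ω)) :
    Q {ω | ρ ω = T} = 1 := by
  have hρT : {ω | ρ ω = T} = {ω | T ≤ ρ ω} :=
    ext fun ω => ⟨ge_of_eq, le_antisymm (hρdef ω).1⟩
  have hρ : IsLastArgmax ρ X T := hρdef
  have hLT : ∀ᵐ ω ∂P, ω ∈ {ω | T ≤ ρ ω} → L T ω = densityProduct ℱ P ρ T ω := by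
    filter_upwards [ae_forall_le_eq_densityProduct hL0 hLrec,
      ae_sInf_eq_horizon hXadapted hXpos hρ hρmeas hZ] with ω hL hζ hTρ
    exact hL T ((hζdef ω).trans (hζ hTρ)).ge
  have hA : MeasurableSet {ω | T ≤ ρ ω} := hρmeas measurableSet_Ici
  rw [hQ, hρT, withDensity_apply _ hA,
    setLIntegral_congr_fun_ae hA (hLT.mono fun ω h hω => by rw [h hω]),
    setLIntegral_densityProduct_horizon (hρ.measurableSet_horizon_le hXadapted)]
  exact lintegral_densityProduct_eq_one hρmeas T fun t ht =>
    measure_le_inter_condExp_eq_zero hXadapted hXpos hρ hρmeas ht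

/-- Example: last time of maximum in discrete time becomes `T` under `Q`.
Finite-horizon discrete-time setting. Let `X` be adapted with
`P[X_{t+1} ≥ X_t | 𝓕_t] > 0` a.s. for all `t < T`, and let `ρ` be the last time at which
`X` attains its overall maximum over `{0,…,T}`.  With `Z`, `ζ₀`, `L` and `dQ = L_T dP` as
in the canonical discrete-time construction, it holds that `Q[ρ = T] = 1`. -/
theorem last_time_of_maximum_discrete
    {Ω : Type*} {m : MeasurableSpace Ω}
    (ℱ : Filtration ℕ m) (P : Measure Ω) [IsProbabilityMeasure P] (T : ℕ)
    (U : Ω → ℝ) (hUmeas : Measurable U)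
    (hUlaw : Measure.map U P = (volume : Measure ℝ).restrict (Set.Ico (0:ℝ) 1))
    (hUindep : Indep (MeasurableSpace.comap U (inferInstance : MeasurableSpace ℝ)) (ℱ T) P)
    (hm : m = (ℱ T : MeasurableSpace Ω) ⊔
        MeasurableSpace.comap U (inferInstance : MeasurableSpace ℝ))
    (X : ℕ → Ω → ℝ) (hXadapted : Adapted ℱ X)
    (hXpos : ∀ t : ℕ, t < T → ∀ᵐ ω ∂P,
      0 < (P[({ω' | X t ω' ≤ X (t+1) ω'}.indicator fun _ => (1:ℝ)) | ℱ t]) ω)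
    (ρ : Ω → ℕ) (hρmeas : Measurable ρ)
    (hρdef : ∀ ω, ρ ω ≤ T ∧ (∀ t ≤ T, X t ω ≤ X (ρ ω) ω) ∧
      (∀ t ≤ T, (∀ s ≤ T, X s ω ≤ X t ω) → t ≤ ρ ω))
    (Z : ℕ → Ω → ℝ)
    (hZ : ∀ t : ℕ,
      Z t =ᵐ[P] P[({ω | t < ρ ω}.indicator fun _ => (1:ℝ)) | ℱ t])
    (hZadapted : ∀ t, StronglyMeasurable[ℱ t] (Z t))
    (ζ : Ω → ℕ) (hζdef : ∀ ω, ζ ω = sInf {t : ℕ | Z t ω = 0})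
    (hζstop : IsStoppingTime ℱ (fun ω => (ζ ω : WithTop ℕ)))
    (L : ℕ → Ω → ℝ)
    (hL0 : ∀ ω, L 0 ω = 1)
    (hLrec : ∀ t : ℕ, ∀ᵐ ω ∂P, t + 1 ≤ ζ ω →
      L (t+1) ω = L t ω
        * (P[({ω' | t + 1 ≤ ρ ω'}.indicator fun _ => (1:ℝ)) | ℱ (t+1)]) ω
        / (P[({ω' | t + 1 ≤ ρ ω'}.indicator fun _ => (1:ℝ)) | ℱ t]) ω)
    (hLconst : ∀ᵐ ω ∂P, ∀ t : ℕ, ζ ω ≤ t → L t ω = L (ζ ω) ω)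
    (Q : Measure Ω)
    (hQ : Q = P.withDensity fun ω => ENNReal.ofReal (L T ω)) :
    Q {ω | ρ ω = T} = 1 :=
  last_time_of_maximum_discrete_general ℱ P T X hXadapted hXpos ρ hρmeas hρdef Z hZ ζ hζdef L hL0
    hLrec Q hQ

end RandTimesDiscrete
end
end
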